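/- arXiv:1504.08299 — 6 statements merged into one kernel-verified Lean document; each statement's English description precedes it below -/
import Mathlib

section
/- If p is a positive integer and a, b, a_1,...,a_n, b_1,...,b_n are positive real numbers such that ∑_{j=1}^n a_j^p ≤ a^p and ∑_{j=1}^n b_j^p ≤ b^p, then (a^p - ∑_{j=1}^n a_j^p)^{1/p} + (b^p - ∑_{j=1}^n b_j^p)^{1/p} ≤ ((a+b)^p - ∑_{j=1}^n (a_j+b_j)^p)^{1/p}. -/
/-- Bellman's classical inequality for positive reals. -/
theorem bellman_classical (n p : ℕ) (hp : 0 < p) (a b : ℝ) (A B : Fin n → ℝ)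
    (ha : 0 < a) (hb : 0 < b) (hA : ∀ j, 0 < A j) (hB : ∀ j, 0 < B j)
    (hsa : ∑ j, A j ^ p ≤ a ^ p) (hsb : ∑ j, B j ^ p ≤ b ^ p) :
    (a ^ p - ∑ j, A j ^ p) ^ (1 / (p : ℝ)) + (b ^ p - ∑ j, B j ^ p) ^ (1 / (p : ℝ)) ≤
      ((a + b) ^ p - ∑ j, (A j + B j) ^ p) ^ (1 / (p : ℝ)) := by
  have hp' : (p : ℝ) ≠ 0 := Nat.cast_ne_zero.mpr hp.ne'
  have hp1 : (1 : ℝ) ≤ (p : ℝ) := by exact_mod_cast hp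
  set c : ℝ := a ^ p - ∑ j, A j ^ p with hc
  set d : ℝ := b ^ p - ∑ j, B j ^ p with hd
  have hc0 : 0 ≤ c := sub_nonneg.mpr hsa
  have hd0 : 0 ≤ d := sub_nonneg.mpr hsb
  set x : ℝ := c ^ (1 / (p : ℝ)) with hxdef
  set y : ℝ := d ^ (1 / (p : ℝ)) with hydef
  have hx0 : 0 ≤ x := Real.rpow_nonneg hc0 _
  have hy0 : 0 ≤ y := Real.rpow_nonneg hd0 _
  have hxp : x ^ p = c := by
    rw [hxdef, one_div, Real.rpow_inv_natCast_pow hc0 hp.ne']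
  have hyp : y ^ p = d := by
    rw [hydef, one_div, Real.rpow_inv_natCast_pow hd0 hp.ne']
  -- vectors of length n+1
  set f : Fin (n + 1) → ℝ := Fin.cons x A with hf
  set g : Fin (n + 1) → ℝ := Fin.cons y B with hg
  have hfnn : ∀ i ∈ Finset.univ, 0 ≤ f i := by
    intro i _; refine Fin.cases ?_ ?_ i
    · simpa [hf] using hx0
    · intro j; simpa [hf] using (hA j).le
  have hgnn : ∀ i ∈ Finset.univ, 0 ≤ g i := by
    intro i _; refine Fin.cases ?_ ?_ i
    · simpa [hg] using hy0
    · intro j; simpa [hg] using (hB j).le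
  have mink := Real.Lp_add_le_of_nonneg (f := f) (g := g) Finset.univ hp1 hfnn hgnn
  -- rewrite rpow-of-nonneg as natural powers
  have hrpow : ∀ t : ℝ, 0 ≤ t → t ^ (p : ℝ) = t ^ p := fun t ht => Real.rpow_natCast t p
  have hsumf : ∑ i, f i ^ (p : ℝ) = a ^ p := by
    have : ∀ i, f i ^ (p : ℝ) = f i ^ p := by
      intro i; rw [Real.rpow_natCast]
    simp only [this]
    rw [hf, Fin.sum_univ_succ]
    simp only [Fin.cons_zero, Fin.cons_succ]
    rw [hxp, hc]; ring
  have hsumg : ∑ i, g i ^ (p : ℝ) = b ^ p := by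
    have : ∀ i, g i ^ (p : ℝ) = g i ^ p := by
      intro i; rw [Real.rpow_natCast]
    simp only [this]
    rw [hg, Fin.sum_univ_succ]
    simp only [Fin.cons_zero, Fin.cons_succ]
    rw [hyp, hd]; ring
  have hsumfg : ∑ i, (f i + g i) ^ (p : ℝ) = (x + y) ^ p + ∑ j, (A j + B j) ^ p := by
    have : ∀ i : Fin (n+1), (f i + g i) ^ (p : ℝ) = (f i + g i) ^ p := by
      intro i; rw [Real.rpow_natCast]
    simp only [this]
    have : (fun i : Fin (n+1) => (f i + g i) ^ p) = Fin.cons ((x + y) ^ p)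
        (fun j => (A j + B j) ^ p) := by
      funext i
      refine Fin.cases ?_ ?_ i <;> simp [hf, hg]
    rw [this, Fin.sum_cons]
  rw [hsumf, hsumg, hsumfg] at mink
  -- raise to p-th power
  have hap : (a ^ p) ^ (1 / (p : ℝ)) = a := by
    rw [one_div, Real.pow_rpow_inv_natCast ha.le hp.ne']
  have hbp : (b ^ p) ^ (1 / (p : ℝ)) = b := by
    rw [one_div, Real.pow_rpow_inv_natCast hb.le hp.ne']
  rw [hap, hbp] at mink
  have hU0 : 0 ≤ (x + y) ^ p + ∑ j, (A j + B j) ^ p := by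
    apply add_nonneg (pow_nonneg (add_nonneg hx0 hy0) p)
    exact Finset.sum_nonneg fun j _ => pow_nonneg (add_nonneg (hA j).le (hB j).le) p
  have h2 : (x + y) ^ p + ∑ j, (A j + B j) ^ p ≤ (a + b) ^ p := by
    have := pow_le_pow_left₀ (Real.rpow_nonneg hU0 _) mink p
    rwa [one_div, Real.rpow_inv_natCast_pow hU0 hp.ne'] at this
  have h3 : (x + y) ^ p ≤ (a + b) ^ p - ∑ j, (A j + B j) ^ p := by linarith
  calc x + y = ((x + y) ^ p) ^ (1 / (p : ℝ)) := by
        rw [one_div, Real.pow_rpow_inv_natCast (add_nonneg hx0 hy0) hp.ne']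
    _ ≤ ((a + b) ^ p - ∑ j, (A j + B j) ^ p) ^ (1 / (p : ℝ)) :=
        Real.rpow_le_rpow (pow_nonneg (add_nonneg hx0 hy0) p) h3 (by positivity)
end

section
/- Let f be a continuous strictly concave function on [m,M] with m < M, and let μ_f = (f(M)-f(m))/(M-m), ν_f = (Mf(m)-mf(M))/(M-m), β_f = max_{m ≤ t ≤ M} (f(t) - μ_f t - ν_f). Then for every self-adjoint operator A on a Hilbert space H with spectrum in [m,M] and every unital positive linear map Φ from B(H) to B(K), one has β_f·I_K + Φ(f(A)) ≥ f(Φ(A)). -/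
/-! Mond–Pečarić method: on `[m, M]` the function `f` lies between its chord
`ℓ t = μ_f t + ν_f` and `ℓ + β_f`. Monotonicity of the functional calculus gives
`f (Φ A) ≤ ℓ (Φ A) + β_f` and `ℓ A ≤ f A`, and since `ℓ` is affine and `Φ` is unital and positive,
`ℓ (Φ A) = Φ (ℓ A) ≤ Φ (f A)`. -/

open Set

lemma ConcaveOn.chord_le {f : ℝ → ℝ} {a b : ℝ} (hf : ConcaveOn ℝ (Icc a b) f) (hab : a < b)
    {t : ℝ} (ht : t ∈ Icc a b) :
    (f b - f a) / (b - a) * t + (b * f a - a * f b) / (b - a) ≤ f t := by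
  have hba : 0 < b - a := sub_pos.2 hab
  set w := (t - a) / (b - a)
  have key := hf.2 (left_mem_Icc.2 hab.le) (right_mem_Icc.2 hab.le)
    (by rw [sub_nonneg, div_le_one hba]; linarith [ht.2]) (div_nonneg (sub_nonneg.2 ht.1) hba.le)
    (sub_add_cancel 1 w)
  have ht_eq : (1 - w) • a + w • b = t := by
    simp only [w, smul_eq_mul]; field_simp; ring
  rw [ht_eq, smul_eq_mul, smul_eq_mul] at key
  calc (f b - f a) / (b - a) * t + (b * f a - a * f b) / (b - a)
      = (1 - w) * f a + w * f b := by simp only [w]; field_simp; ring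
    _ ≤ f t := key

section CStarAlgebra

variable {A B : Type*} [CStarAlgebra A] [CStarAlgebra B]

lemma cfc_const_mul_id_add_const (μ ν : ℝ) (a : A) (ha : IsSelfAdjoint a := by cfc_tac) :
    cfc (fun t : ℝ => μ * t + ν) a = μ • a + ν • (1 : A) := by
  rw [cfc_add_const ν (fun t => μ * t) a, cfc_const_mul_id μ a, Algebra.algebraMap_eq_smul_one]

lemma map_real_smul_add_smul_one {F : Type*} [FunLike F A B] [LinearMapClass F ℂ A B] (φ : F)
    (hφ : φ 1 = 1) (μ ν : ℝ) (a : A) : φ (μ • a + ν • (1 : A)) = μ • φ a + ν • (1 : B) := by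
  rw [map_add, LinearMapClass.map_smul_of_tower, LinearMapClass.map_smul_of_tower, hφ]

variable [PartialOrder A] [StarOrderedRing A] [PartialOrder B] [StarOrderedRing B]

lemma IsSelfAdjoint.spectrum_subset_Icc_iff {a : A} (ha : IsSelfAdjoint a) {m M : ℝ} :
    spectrum ℝ a ⊆ Icc m M ↔ m • (1 : A) ≤ a ∧ a ≤ M • (1 : A) := by
  simp only [← Algebra.algebraMap_eq_smul_one, algebraMap_le_iff_le_spectrum ha,
    le_algebraMap_iff_spectrum_le ha, subset_def, mem_Icc, ← forall_and]

namespace PositiveLinearMap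

variable (ψ : A →ₚ[ℂ] B) (hψ : ψ 1 = 1)
include hψ

lemma spectrum_subset_Icc {a : A} (ha : IsSelfAdjoint a) {m M : ℝ}
    (hspec : spectrum ℝ a ⊆ Icc m M) : spectrum ℝ (ψ a) ⊆ Icc m M := by
  obtain ⟨hm, hM⟩ := ha.spectrum_subset_Icc_iff.1 hspec
  refine (ha.map' ψ).spectrum_subset_Icc_iff.2 ⟨?_, ?_⟩
  · simpa [LinearMapClass.map_smul_of_tower, hψ] using ψ.monotone hm
  · simpa [LinearMapClass.map_smul_of_tower, hψ] using ψ.monotone hM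

lemma cfc_map_le_smul_one_add_map_cfc {f : ℝ → ℝ} {a : A} (ha : IsSelfAdjoint a) {m M μ ν β : ℝ}
    (hspec : spectrum ℝ a ⊆ Icc m M) (hf : ContinuousOn f (Icc m M))
    (h_lower : ∀ t ∈ Icc m M, μ * t + ν ≤ f t) (h_upper : ∀ t ∈ Icc m M, f t ≤ μ * t + ν + β) :
    cfc f (ψ a) ≤ β • (1 : B) + ψ (cfc f a) := by
  have hψa := ψ.spectrum_subset_Icc hψ ha hspec
  calc cfc f (ψ a) ≤ cfc (fun t => μ * t + (ν + β)) (ψ a) :=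
        cfc_mono (fun t ht => (h_upper t (hψa ht)).trans_eq (add_assoc ..))
          (hf.mono hψa) (by fun_prop)
    _ = β • (1 : B) + ψ (cfc (fun t => μ * t + ν) a) := by
        rw [cfc_const_mul_id_add_const _ _ _ (ha.map' ψ), cfc_const_mul_id_add_const _ _ _ ha,
          map_real_smul_add_smul_one ψ hψ, add_smul]
        abel
    _ ≤ β • (1 : B) + ψ (cfc f a) := by
        gcongr
        exact cfc_mono (fun t ht => h_lower t (hspec ht)) (by fun_prop) (hf.mono hspec)

end PositiveLinearMap

end CStarAlgebra

/-- Difference-type reverse of the Choi–Davis–Jensen inequality (Mond–Pečarić method):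
`f (Φ A) ≤ β_f • 1 + Φ (f A)` for a strictly concave continuous `f` on `[m, M]`,
a unital positive linear map `Φ`, and a self-adjoint `A` with spectrum in `[m, M]`. -/
theorem reverse_choi_davis_jensen_diff
    {𝒜 ℬ : Type*} [CStarAlgebra 𝒜] [PartialOrder 𝒜] [StarOrderedRing 𝒜]
    [CStarAlgebra ℬ] [PartialOrder ℬ] [StarOrderedRing ℬ]
    (m M : ℝ) (hmM : m < M) (f : ℝ → ℝ)
    (hf_cont : ContinuousOn f (Set.Icc m M))
    (hf_concave : StrictConcaveOn ℝ (Set.Icc m M) f)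
    (β : ℝ)
    (hβ : IsGreatest ((fun t => f t - (f M - f m) / (M - m) * t -
        (M * f m - m * f M) / (M - m)) '' Set.Icc m M) β)
    (Φ : 𝒜 →ₗ[ℂ] ℬ) (hΦ1 : Φ 1 = 1) (hΦpos : ∀ a : 𝒜, 0 ≤ a → 0 ≤ Φ a)
    (A : 𝒜) (hA : IsSelfAdjoint A) (hspec : spectrum ℝ A ⊆ Set.Icc m M) :
    cfc f (Φ A) ≤ β • (1 : ℬ) + Φ (cfc f A) :=
  (PositiveLinearMap.mk₀ Φ hΦpos).cfc_map_le_smul_one_add_map_cfc hΦ1 hA hspec hf_cont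
    (fun _ ht => hf_concave.concaveOn.chord_le hmM ht)
    (fun t ht => by linarith [hβ.2 ⟨t, ht, rfl⟩])
end

section
/- Let 0 < p < 1, let A_1,...,A_n be self-adjoint operators on a Hilbert space H with 0 ≤ m·I_H ≤ A_j ≤ M·I_H < I_H, let Φ_1,...,Φ_n be unital positive linear maps from B(H) to B(K), and let ω_1,...,ω_n be positive reals with ∑ ω_j = 1. Set δ = (1-p)·((1/p)·((1-m)^p - (1-M)^p)/(M-m))^{p/(p-1)} + ((1-M)(1-m)^p - (1-m)(1-M)^p)/(M-m). Then δ·I_K + ∑_{j=1}^n ω_j Φ_j((I_H - A_j)^p) ≥ (∑_{j=1}^n ω_j Φ_j(I_H - A_j))^p. -/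
/-!
With `a = 1 - M`, `b = 1 - m`, let `α t + β` be the chord of the concave function `t ↦ t ^ p`
over `[a, b]`, so `α B + β ≤ B ^ p` for every `B` with spectrum in `[a, b]`, and let
`α t + γ`, `γ = (1 - p) (α / p) ^ (p / (p - 1))`, be its tangent line of slope `α`, so
`X ^ p ≤ α X + γ` for every `X ≥ 0`. Applying the chord bound to `B_j = 1 - A_j`, pushing it
through the unital positive maps `Φ_j` and averaging gives `α X + β ≤ ∑ ω_j Φ_j (B_j ^ p)` for
`X = ∑ ω_j Φ_j B_j`, and the constant of the theorem is `γ - β`.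
-/

open Real

theorem Real.rpow_le_mul_add_of_lt_one {p α t : ℝ} (hp0 : 0 < p) (hp1 : p < 1) (hα : 0 < α)
    (ht : 0 ≤ t) : t ^ p ≤ α * t + (1 - p) * (α / p) ^ (p / (p - 1)) := by
  set c := α / p
  have hc : 0 < c := div_pos hα hp0
  have hsplit : t ^ p = (c * t) ^ p * (c ^ (p / (p - 1))) ^ (1 - p) := by
    have hexp : p + p / (p - 1) * (1 - p) = 0 := by field_simp [(by linarith : p - 1 ≠ 0)]; ring
    rw [mul_rpow hc.le ht, ← rpow_mul hc.le, mul_right_comm, ← rpow_add hc, hexp, rpow_zero,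
      one_mul]
  calc t ^ p = (c * t) ^ p * (c ^ (p / (p - 1))) ^ (1 - p) := hsplit
    _ ≤ p * (c * t) + (1 - p) * c ^ (p / (p - 1)) :=
      geom_mean_le_arith_mean2_weighted hp0.le (by linarith) (by positivity) (by positivity)
        (by ring)
    _ = α * t + (1 - p) * c ^ (p / (p - 1)) := by
      rw [← mul_assoc, mul_div_cancel₀ α hp0.ne']

theorem ConcaveOn.secant_le {s : Set ℝ} {f : ℝ → ℝ} (hf : ConcaveOn ℝ s f) {a b t : ℝ}
    (ha : a ∈ s) (hb : b ∈ s) (hab : a < b) (hat : a ≤ t) (htb : t ≤ b) :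
    (f b - f a) / (b - a) * t + (b * f a - a * f b) / (b - a) ≤ f t := by
  have hba : b - a ≠ 0 := (sub_pos.2 hab).ne'
  have hcomb : (b - t) / (b - a) * a + (t - a) / (b - a) * b = t := by field_simp; ring
  have h := hf.2 ha hb (div_nonneg (sub_nonneg.2 htb) (sub_pos.2 hab).le)
    (div_nonneg (sub_nonneg.2 hat) (sub_pos.2 hab).le) (by field_simp; ring)
  simp only [smul_eq_mul, hcomb] at h
  calc _ = (b - t) / (b - a) * f a + (t - a) / (b - a) * f b := by field_simp; ring
    _ ≤ f t := h

section CStarAlgebra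

variable {𝒜 : Type*} [CStarAlgebra 𝒜]

theorem cfc_affine {a : 𝒜} (ha : IsSelfAdjoint a) (c d : ℝ) :
    cfc (fun t : ℝ => c * t + d) a = c • a + d • 1 := by
  rw [cfc_add a (fun t => c * t) (fun _ => d), cfc_const_mul c (fun t : ℝ => t) a, cfc_id' ℝ a,
    cfc_const d a, Algebra.algebraMap_eq_smul_one]

variable [PartialOrder 𝒜] [StarOrderedRing 𝒜]

theorem spectrum_subset_Icc_of_smul_one_le {a : 𝒜} {r s : ℝ} (hr : r • 1 ≤ a)
    (hs : a ≤ s • 1) : spectrum ℝ a ⊆ Set.Icc r s := by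
  rw [← Algebra.algebraMap_eq_smul_one] at hr hs
  have ha : IsSelfAdjoint a := by
    simpa using
      (IsSelfAdjoint.of_nonneg (sub_nonneg.2 hr)).add (IsSelfAdjoint.algebraMap 𝒜 (.all r))
  exact fun t ht => ⟨(algebraMap_le_iff_le_spectrum ha).1 hr t ht,
    (le_algebraMap_iff_spectrum_le ha).1 hs t ht⟩

theorem cfc_le_affine {f : ℝ → ℝ} {a : 𝒜} (ha : IsSelfAdjoint a) {c d : ℝ}
    (h : ∀ t ∈ spectrum ℝ a, f t ≤ c * t + d)
    (hf : ContinuousOn f (spectrum ℝ a) := by cfc_cont_tac) :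
    cfc f a ≤ c • a + d • 1 :=
  cfc_affine ha c d ▸ cfc_mono h

theorem affine_le_cfc {f : ℝ → ℝ} {a : 𝒜} (ha : IsSelfAdjoint a) {c d : ℝ}
    (h : ∀ t ∈ spectrum ℝ a, c * t + d ≤ f t)
    (hf : ContinuousOn f (spectrum ℝ a) := by cfc_cont_tac) :
    c • a + d • 1 ≤ cfc f a :=
  cfc_affine ha c d ▸ cfc_mono h

variable {ℬ ι : Type*} [CStarAlgebra ℬ] [PartialOrder ℬ] [StarOrderedRing ℬ] [Fintype ι]

theorem affine_le_sum_smul_map {Φ : ι → 𝒜 →ₗ[ℂ] ℬ} (hΦ1 : ∀ j, Φ j 1 = 1)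
    (hΦpos : ∀ j, ∀ a : 𝒜, 0 ≤ a → 0 ≤ Φ j a) {ω : ι → ℝ} (hω : ∀ j, 0 ≤ ω j)
    (hωsum : ∑ j, ω j = 1) {x y : ι → 𝒜} {c d : ℝ} (h : ∀ j, c • x j + d • 1 ≤ y j) :
    c • ∑ j, ω j • Φ j (x j) + d • 1 ≤ ∑ j, ω j • Φ j (y j) := by
  have hmap : ∀ j, c • Φ j (x j) + d • 1 ≤ Φ j (y j) := fun j => by
    have hmono : Monotone (Φ j) := (PositiveLinearMap.mk₀ (Φ j) (hΦpos j)).monotone'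
    simpa only [map_add, LinearMap.map_smul_of_tower, hΦ1] using hmono (h j)
  calc c • ∑ j, ω j • Φ j (x j) + d • 1 = ∑ j, ω j • (c • Φ j (x j) + d • 1) := by
        simp only [smul_add, Finset.sum_add_distrib, Finset.smul_sum, smul_comm c,
          ← Finset.sum_smul, hωsum, one_smul]
    _ ≤ ∑ j, ω j • Φ j (y j) :=
        Finset.sum_le_sum fun j _ => smul_le_smul_of_nonneg_left (hmap j) (hω j)

end CStarAlgebra

theorem reverse_operator_bellman_general
    {𝒜 ℬ : Type*} [CStarAlgebra 𝒜] [PartialOrder 𝒜] [StarOrderedRing 𝒜]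
    [CStarAlgebra ℬ] [PartialOrder ℬ] [StarOrderedRing ℬ]
    (n : ℕ) (p m M : ℝ) (hp0 : 0 < p) (hp1 : p < 1)
    (hmM : m < M) (hM : M < 1)
    (A : Fin n → 𝒜)
    (hAm : ∀ j, m • (1 : 𝒜) ≤ A j) (hAM : ∀ j, A j ≤ M • (1 : 𝒜))
    (Φ : Fin n → (𝒜 →ₗ[ℂ] ℬ)) (hΦ1 : ∀ j, Φ j 1 = 1)
    (hΦpos : ∀ j, ∀ a : 𝒜, 0 ≤ a → 0 ≤ Φ j a)
    (ω : Fin n → ℝ) (hω : ∀ j, 0 < ω j) (hωsum : ∑ j, ω j = 1) :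
    cfc (fun t : ℝ => t ^ p) (∑ j, ω j • Φ j (1 - A j)) ≤
      ((1 - p) * ((1 / p) * ((1 - m) ^ p - (1 - M) ^ p) / (M - m)) ^ (p / (p - 1)) +
          ((1 - M) * (1 - m) ^ p - (1 - m) * (1 - M) ^ p) / (M - m)) • (1 : ℬ) +
        ∑ j, ω j • Φ j (cfc (fun t : ℝ => t ^ p) (1 - A j)) := by
  set a := 1 - M
  set b := 1 - m
  have ha : 0 < a := by linarith
  have hab : a < b := by linarith
  have hba : b - a = M - m := by ring
  set α := (b ^ p - a ^ p) / (b - a)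
  set β := (b * a ^ p - a * b ^ p) / (b - a)
  set γ := (1 - p) * (α / p) ^ (p / (p - 1))
  have hα : 0 < α := div_pos (sub_pos.2 (rpow_lt_rpow ha.le hab hp0)) (sub_pos.2 hab)
  have hδ : (1 - p) * ((1 / p) * (b ^ p - a ^ p) / (M - m)) ^ (p / (p - 1)) +
      (a * b ^ p - b * a ^ p) / (M - m) = γ - β := by
    simp only [α, β, γ, hba]
    ring_nf
  have hB : ∀ j, a • (1 : 𝒜) ≤ 1 - A j ∧ 1 - A j ≤ b • 1 := fun j => by
    simp only [a, b, sub_smul, one_smul]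
    exact ⟨sub_le_sub_left (hAM j) 1, sub_le_sub_left (hAm j) 1⟩
  have hB0 : ∀ j, 0 ≤ 1 - A j := fun j => (smul_nonneg ha.le zero_le_one).trans (hB j).1
  have hcont : Continuous fun t : ℝ => t ^ p := continuous_rpow_const hp0.le
  have hchord : ∀ j, α • (1 - A j) + β • 1 ≤ cfc (fun t : ℝ => t ^ p) (1 - A j) := fun j =>
    affine_le_cfc (.of_nonneg (hB0 j)) (hf := hcont.continuousOn) fun t ht =>
      have ht' := spectrum_subset_Icc_of_smul_one_le (hB j).1 (hB j).2 ht
      (concaveOn_rpow hp0.le hp1.le).secant_le ha.le (ha.trans hab).le hab ht'.1 ht'.2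
  set X := ∑ j, ω j • Φ j (1 - A j)
  have hX : 0 ≤ X := Finset.sum_nonneg fun j _ =>
    smul_nonneg (hω j).le (hΦpos j _ (hB0 j))
  have htangent : cfc (fun t : ℝ => t ^ p) X ≤ α • X + γ • 1 :=
    cfc_le_affine (.of_nonneg hX) (hf := hcont.continuousOn) fun t ht =>
      rpow_le_mul_add_of_lt_one hp0 hp1 hα (spectrum_nonneg_of_nonneg hX ht)
  have hjensen := affine_le_sum_smul_map hΦ1 hΦpos (fun j => (hω j).le) hωsum hchord
  rw [hδ, sub_smul]
  calc cfc (fun t : ℝ => t ^ p) X ≤ α • X + γ • 1 := htangent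
    _ = γ • 1 - β • 1 + (α • X + β • 1) := by abel
    _ ≤ _ := add_le_add_right hjensen _

/-- A reverse operator Bellman inequality:
`(∑ ω_j Φ_j(1 - A_j))^p ≤ δ•1 + ∑ ω_j Φ_j((1 - A_j)^p)`. -/
theorem reverse_operator_bellman
    {𝒜 ℬ : Type*} [CStarAlgebra 𝒜] [PartialOrder 𝒜] [StarOrderedRing 𝒜]
    [CStarAlgebra ℬ] [PartialOrder ℬ] [StarOrderedRing ℬ]
    (n : ℕ) (p m M : ℝ) (hp0 : 0 < p) (hp1 : p < 1)
    (hm : 0 ≤ m) (hmM : m < M) (hM : M < 1)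
    (A : Fin n → 𝒜) (hA : ∀ j, IsSelfAdjoint (A j))
    (hAm : ∀ j, m • (1 : 𝒜) ≤ A j) (hAM : ∀ j, A j ≤ M • (1 : 𝒜))
    (Φ : Fin n → (𝒜 →ₗ[ℂ] ℬ)) (hΦ1 : ∀ j, Φ j 1 = 1)
    (hΦpos : ∀ j, ∀ a : 𝒜, 0 ≤ a → 0 ≤ Φ j a)
    (ω : Fin n → ℝ) (hω : ∀ j, 0 < ω j) (hωsum : ∑ j, ω j = 1) :
    cfc (fun t : ℝ => t ^ p) (∑ j, ω j • Φ j (1 - A j)) ≤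
      ((1 - p) * ((1 / p) * ((1 - m) ^ p - (1 - M) ^ p) / (M - m)) ^ (p / (p - 1)) +
          ((1 - M) * (1 - m) ^ p - (1 - m) * (1 - M) ^ p) / (M - m)) • (1 : ℬ) +
        ∑ j, ω j • Φ j (cfc (fun t : ℝ => t ^ p) (1 - A j)) :=
  reverse_operator_bellman_general n p m M hp0 hp1 hmM hM A hAm hAM Φ hΦ1 hΦpos ω hω hωsum
end

section
/- Let m, n be positive integers, 0 < p < 1, ω_1,...,ω_n positive reals with ∑_{j=1}^n ω_j = 1, and a_{ij} (1 ≤ i ≤ m, 1 ≤ j ≤ n) positive reals with ∑_{i=1}^m a_{ij}^{1/p} ≤ 1 for each j. Then (1-p)·p^{p/(1-p)} + ∑_{j=1}^n ω_j (1 - ∑_{i=1}^m a_{ij}^{1/p})^p ≥ (1 - ∑_{i=1}^m ∑_{j=1}^n ω_j a_{ij}^{1/p})^p. -/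
open Finset

lemma rb_aux1 (p : ℝ) (hp0 : 0 < p) (hp1 : p < 1) (t : ℝ) (ht : 0 ≤ t) :
    t ^ p ≤ (1 - p) * p ^ (p / (1 - p)) + t := by
  have h1p : (0:ℝ) < 1 - p := by linarith
  have key := Real.geom_mean_le_arith_mean2_weighted hp0.le h1p.le
    (div_nonneg ht hp0.le) (Real.rpow_nonneg hp0.le (p / (1 - p))) (by ring)
  have e2 : (p ^ (p / (1 - p))) ^ (1 - p) = p ^ p := by
    rw [← Real.rpow_mul hp0.le, div_mul_cancel₀ p h1p.ne']
  rw [e2, Real.div_rpow ht hp0.le, div_mul_cancel₀ _ (Real.rpow_pos_of_pos hp0 p).ne',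
    mul_div_cancel₀ _ hp0.ne'] at key
  linarith

lemma rb_aux2 (p : ℝ) (hp0 : 0 < p) (hp1 : p < 1) (t : ℝ) (ht0 : 0 ≤ t)
    (ht1 : t ≤ 1) : t ≤ t ^ p := by
  rcases eq_or_lt_of_le ht0 with h | h
  · rw [← h, Real.zero_rpow hp0.ne']
  · calc t = t ^ (1:ℝ) := (Real.rpow_one t).symm
    _ ≤ t ^ p := Real.rpow_le_rpow_of_exponent_ge h ht1 hp1.le

/-- A scalar reverse Bellman inequality. -/
theorem reverse_bellman_scalar (m n : ℕ) (hm : 0 < m) (hn : 0 < n) (p : ℝ)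
    (hp0 : 0 < p) (hp1 : p < 1) (ω : Fin n → ℝ) (hω : ∀ j, 0 < ω j)
    (hωsum : ∑ j, ω j = 1) (a : Fin m → Fin n → ℝ) (ha : ∀ i j, 0 < a i j)
    (hle : ∀ j, ∑ i, a i j ^ (1 / p) ≤ 1) :
    (1 - ∑ i, ∑ j, ω j * a i j ^ (1 / p)) ^ p ≤
      (1 - p) * p ^ (p / (1 - p)) + ∑ j, ω j * (1 - ∑ i, a i j ^ (1 / p)) ^ p := by
  set s : Fin n → ℝ := fun j => ∑ i, a i j ^ (1 / p) with hs
  have hs0 : ∀ j, 0 ≤ s j := fun j =>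
    Finset.sum_nonneg fun i _ => (Real.rpow_pos_of_pos (ha i j) _).le
  have hswap : ∑ i, ∑ j, ω j * a i j ^ (1 / p) = ∑ j, ω j * s j := by
    rw [Finset.sum_comm]
    exact Finset.sum_congr rfl fun j _ => by rw [hs, Finset.mul_sum]
  have hT1 : ∑ j, ω j * s j ≤ 1 := by
    calc ∑ j, ω j * s j ≤ ∑ j, ω j * 1 :=
      Finset.sum_le_sum fun j _ => mul_le_mul_of_nonneg_left (hle j) (hω j).le
    _ = 1 := by simp [hωsum]
  have hT0 : 0 ≤ ∑ j, ω j * s j :=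
    Finset.sum_nonneg fun j _ => mul_nonneg (hω j).le (hs0 j)
  rw [hswap]
  calc (1 - ∑ j, ω j * s j) ^ p
      ≤ (1 - p) * p ^ (p / (1 - p)) + (1 - ∑ j, ω j * s j) :=
        rb_aux1 p hp0 hp1 _ (by linarith)
    _ = (1 - p) * p ^ (p / (1 - p)) + ∑ j, ω j * (1 - s j) := by
        rw [Finset.sum_congr rfl fun j (_ : j ∈ univ) => mul_one_sub (ω j) (s j),
          Finset.sum_sub_distrib, hωsum]

    _ ≤ (1 - p) * p ^ (p / (1 - p)) + ∑ j, ω j * (1 - s j) ^ p := by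
        have : ∑ j, ω j * (1 - s j) ≤ ∑ j, ω j * (1 - s j) ^ p :=
          Finset.sum_le_sum fun j _ => mul_le_mul_of_nonneg_left
            (rb_aux2 p hp0 hp1 _ (by linarith [hle j]) (by linarith [hs0 j])) (hω j).le
        linarith
end

section
/- Let m, n be positive integers, 0 < p < 1, ω_1,...,ω_n positive reals with ∑_{j=1}^n ω_j = 1, and a_{ij} (1 ≤ i ≤ m, 1 ≤ j ≤ n) positive real numbers with ∑_{i=1}^m a_{ij}^{1/p} ≤ 1 for each j. Then ∑_{j=1}^n ω_j (1 - ∑_{i=1}^m a_{ij}^{1/p})^p ≤ (1 - ∑_{i=1}^m (∑_{j=1}^n ω_j a_{ij})^{1/p})^p. -/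
/-- Weighted scalar Bellman-type inequality. -/
theorem bellman_weighted_scalar (m n : ℕ) (hm : 0 < m) (hn : 0 < n) (p : ℝ)
    (hp0 : 0 < p) (hp1 : p < 1) (ω : Fin n → ℝ) (hω : ∀ j, 0 < ω j)
    (hωsum : ∑ j, ω j = 1) (a : Fin m → Fin n → ℝ) (ha : ∀ i j, 0 < a i j)
    (hle : ∀ j, ∑ i, a i j ^ (1 / p) ≤ 1) :
    ∑ j, ω j * (1 - ∑ i, a i j ^ (1 / p)) ^ p ≤
      (1 - ∑ i, (∑ j, ω j * a i j) ^ (1 / p)) ^ p := by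
  have hq : (1:ℝ) ≤ 1 / p := by rw [le_div_iff₀ hp0]; linarith
  set c : Fin n → ℝ := fun j => 1 - ∑ i, a i j ^ (1 / p) with hc
  have hcnn : ∀ j, 0 ≤ c j := fun j => sub_nonneg.2 (hle j)
  -- step 1: Jensen for each i
  have h1 : ∀ i, (∑ j, ω j * a i j) ^ (1 / p) ≤ ∑ j, ω j * a i j ^ (1 / p) := by
    intro i
    exact Real.rpow_arith_mean_le_arith_mean_rpow Finset.univ ω (fun j => a i j)
      (fun j _ => (hω j).le) hωsum (fun j _ => (ha i j).le) hq
  -- step 2: base inequality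
  have h2 : ∑ j, ω j * c j ≤ 1 - ∑ i, (∑ j, ω j * a i j) ^ (1 / p) := by
    have : ∑ i, (∑ j, ω j * a i j) ^ (1 / p) ≤ ∑ j, ω j * ∑ i, a i j ^ (1 / p) := by
      calc ∑ i, (∑ j, ω j * a i j) ^ (1 / p)
          ≤ ∑ i, ∑ j, ω j * a i j ^ (1 / p) := Finset.sum_le_sum fun i _ => h1 i
        _ = ∑ j, ω j * ∑ i, a i j ^ (1 / p) := by
            rw [Finset.sum_comm]; simp [Finset.mul_sum]
    have hexp : ∑ j, ω j * c j = 1 - ∑ j, ω j * ∑ i, a i j ^ (1 / p) := by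
      simp [hc, mul_sub, Finset.sum_sub_distrib, hωsum]
    linarith
  -- step 3: concave Jensen
  have h3 : ∑ j, ω j * (c j) ^ p ≤ (∑ j, ω j * c j) ^ p := by
    have := Real.arith_mean_le_rpow_mean Finset.univ ω (fun j => (c j) ^ p)
      (fun j _ => (hω j).le) hωsum (fun j _ => Real.rpow_nonneg (hcnn j) p) hq
    have heq : ∀ j, ((c j) ^ p) ^ p⁻¹ = c j := by
      intro j
      rw [← Real.rpow_mul (hcnn j), mul_inv_cancel₀ hp0.ne', Real.rpow_one]
    rw [one_div_one_div] at this
    simpa [one_div, heq] using this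
  calc ∑ j, ω j * (c j) ^ p ≤ (∑ j, ω j * c j) ^ p := h3
    _ ≤ (1 - ∑ i, (∑ j, ω j * a i j) ^ (1 / p)) ^ p := by
        apply Real.rpow_le_rpow _ h2 hp0.le
        exact Finset.sum_nonneg fun j _ => mul_nonneg (hω j).le (hcnn j)
end

section
/- Let n be a positive integer, 0 < p < 1, and let M_j, a_{ij} (1 ≤ i ≤ m, 1 ≤ j ≤ n) be nonnegative real numbers such that ∑_{i=1}^m a_{ij}^{1/p} ≤ M_j^{1/p} for all j. Then ∑_{j=1}^n (M_j^{1/p} - ∑_{i=1}^m a_{ij}^{1/p})^p ≤ ((∑_{j=1}^n M_j)^{1/p} - ∑_{i=1}^m (∑_{j=1}^n a_{ij})^{1/p})^p. -/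
open Finset in
/-- n-ary Minkowski inequality for nonnegative real functions. -/
lemma minkowski_sum {ι κ : Type*} [Fintype κ] (s : Finset ι) (f : ι → κ → ℝ) {r : ℝ}
    (hr : 1 ≤ r) (hf : ∀ i ∈ s, ∀ l, 0 ≤ f i l) :
    (∑ l, (∑ i ∈ s, f i l) ^ r) ^ (1 / r) ≤ ∑ i ∈ s, (∑ l, f i l ^ r) ^ (1 / r) := by
  classical
  induction s using Finset.cons_induction with
  | empty =>
    simp [Real.zero_rpow (by positivity : r ≠ 0), Real.zero_rpow (show r⁻¹ ≠ 0 by positivity)]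
  | cons i s his ih =>
    have hi0 : ∀ l, 0 ≤ f i l := hf i (mem_cons_self i s)
    have hs0 : ∀ j ∈ s, ∀ l, 0 ≤ f j l := fun j hj l => hf j (mem_cons_of_mem hj) l
    have hsum0 : ∀ l, 0 ≤ ∑ j ∈ s, f j l := fun l => Finset.sum_nonneg fun j hj => hs0 j hj l
    simp only [Finset.sum_cons]
    calc (∑ l, (f i l + ∑ j ∈ s, f j l) ^ r) ^ (1 / r)
        ≤ (∑ l, f i l ^ r) ^ (1 / r) + (∑ l, (∑ j ∈ s, f j l) ^ r) ^ (1 / r) :=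
          Real.Lp_add_le_of_nonneg Finset.univ hr (fun l _ => hi0 l) (fun l _ => hsum0 l)
      _ ≤ (∑ l, f i l ^ r) ^ (1 / r) + ∑ j ∈ s, (∑ l, f j l ^ r) ^ (1 / r) := by
          gcongr
          exact ih hs0

/-- The classical Bellman inequality for nonnegative reals and `0 < p < 1`. -/
theorem bellman_general (m n : ℕ) (hn : 0 < n) (p : ℝ) (hp0 : 0 < p) (hp1 : p < 1)
    (M : Fin n → ℝ) (a : Fin m → Fin n → ℝ) (hM : ∀ j, 0 ≤ M j) (ha : ∀ i j, 0 ≤ a i j)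
    (hle : ∀ j, ∑ i, a i j ^ (1 / p) ≤ M j ^ (1 / p)) :
    ∑ j, (M j ^ (1 / p) - ∑ i, a i j ^ (1 / p)) ^ p ≤
      ((∑ j, M j) ^ (1 / p) - ∑ i, (∑ j, a i j) ^ (1 / p)) ^ p := by
  have hp : p ≠ 0 := ne_of_gt hp0
  set r : ℝ := 1 / p with hr_def
  have hr1 : 1 < r := one_lt_one_div hp0 hp1
  have hr0 : 0 < r := lt_trans one_pos hr1
  have hrne : r ≠ 0 := ne_of_gt hr0
  -- d j : the inner difference, nonnegative
  set d : Fin n → ℝ := fun j => M j ^ r - ∑ i, a i j ^ r with hd_def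
  have hd0 : ∀ j, 0 ≤ d j := fun j => sub_nonneg.mpr (hle j)
  -- the vectors w j : Fin (m+1) → ℝ
  set w : Fin n → Fin (m + 1) → ℝ := fun j => Fin.cons ((d j) ^ p) (fun i => a i j) with hw_def
  have hw0 : ∀ j, ∀ l, 0 ≤ w j l := by
    intro j l
    refine Fin.cases ?_ ?_ l
    · exact Real.rpow_nonneg (hd0 j) p
    · intro i; exact ha i j
  have hpr : p * r = 1 := by
    rw [hr_def]; field_simp
  -- ℓ^r norm of each w j is M j
  have hnorm : ∀ j, ∑ l, w j l ^ r = M j ^ r := by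
    intro j
    rw [Fin.sum_univ_succ]
    have h1 : ((d j) ^ p) ^ r = d j := by
      rw [← Real.rpow_mul (hd0 j), hpr, Real.rpow_one]
    simp only [hw_def, Fin.cons_zero, Fin.cons_succ, h1]
    rw [hd_def]
    ring
  -- Minkowski
  have hmink := minkowski_sum (r := r) Finset.univ w (le_of_lt hr1)
    (fun j _ l => hw0 j l)
  have hMsum : ∑ j, (∑ l, w j l ^ r) ^ (1 / r) = ∑ j, M j := by
    refine Finset.sum_congr rfl fun j _ => ?_
    rw [hnorm j, one_div, Real.rpow_rpow_inv (hM j) hrne]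
  rw [hMsum] at hmink
  -- unfold the inner sums over l
  have hX : ∑ l, (∑ j, w j l) ^ r
      = (∑ j, (d j) ^ p) ^ r + ∑ i, (∑ j, a i j) ^ r := by
    rw [Fin.sum_univ_succ]
    simp only [hw_def, Fin.cons_zero, Fin.cons_succ]
  rw [hX] at hmink
  -- raise to power r
  have hC0 : 0 ≤ ∑ j, (d j) ^ p :=
    Finset.sum_nonneg fun j _ => Real.rpow_nonneg (hd0 j) p
  have hX0 : 0 ≤ (∑ j, (d j) ^ p) ^ r + ∑ i, (∑ j, a i j) ^ r := by
    have : 0 ≤ (∑ j, (d j) ^ p) ^ r := Real.rpow_nonneg hC0 r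
    have h2 : 0 ≤ ∑ i, (∑ j, a i j) ^ r :=
      Finset.sum_nonneg fun i _ =>
        Real.rpow_nonneg (Finset.sum_nonneg fun j _ => ha i j) r
    linarith
  have hkey : (∑ j, (d j) ^ p) ^ r + ∑ i, (∑ j, a i j) ^ r ≤ (∑ j, M j) ^ r := by
    have := Real.rpow_le_rpow (Real.rpow_nonneg hX0 (1/r)) hmink (le_of_lt hr0)
    rwa [one_div, Real.rpow_inv_rpow hX0 hrne] at this
  have hkey2 : (∑ j, (d j) ^ p) ^ r ≤ (∑ j, M j) ^ r - ∑ i, (∑ j, a i j) ^ r := by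
    linarith
  have := Real.rpow_le_rpow (Real.rpow_nonneg hC0 r) hkey2 (le_of_lt hp0)
  rwa [← Real.rpow_mul hC0, mul_comm, hpr, Real.rpow_one] at this
end
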